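/- Let m ≥ 1 be an integer. If y ∈ W^{1,2}(-1,1) satisfies ∫_{-1}^{1} t^k y(t) dt = 0 for k = 0,1,...,m-1, then |y(1)|^2 ≤ (2/(m(m+2))) · ∫_{-1}^{1} |y'(t)|^2 dt, and this constant is sharp. -/

import Mathlib

/-!
Let `L n` be the Legendre polynomials and `E = L (m+1) / ((m+1)(m+2)) + L m / (m(m+1))`.
Then `P = E'` satisfies `P 1 = 1`, `P (-1) = 0` and `deg P' < m`, so for `y` with vanishing
moments of order `< m` an integration by parts gives `y 1 = ∫ P y'`, and Cauchy–Schwarz bounds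
`y 1 ^ 2` by `∫ P ^ 2 * ∫ y' ^ 2`. By orthogonality of the Legendre polynomials `E` itself has
vanishing moments of order `< m`, so the same identity for `y = E` gives
`∫ P ^ 2 = E 1 = 2 / (m (m + 2))`, and `E` attains the bound.
-/

open Polynomial MeasureTheory Set
open scoped Nat

/-- `W12 y g` : `y` is absolutely continuous on `[-1,1]` with derivative `g ∈ L²(-1,1)`. -/
def W12 (y g : ℝ → ℝ) : Prop :=
  IntervalIntegrable g MeasureTheory.volume (-1) 1 ∧
  IntervalIntegrable (fun t => g t ^ 2) MeasureTheory.volume (-1) 1 ∧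
  ∀ t ∈ Set.Icc (-1 : ℝ) 1, y t = y (-1) + ∫ s in (-1 : ℝ)..t, g s

namespace Polynomial

variable {R : Type*} [CommRing R]

theorem eval_iterate_derivative_eq_zero_of_pow_dvd {p : R[X]} {a : R} {n k : ℕ}
    (hp : (X - C a) ^ n ∣ p) (hk : k < n) : eval a (derivative^[k] p) = 0 :=
  dvd_iff_isRoot.mp <| (dvd_pow_self _ (Nat.sub_ne_zero_of_lt hk)).trans
    (pow_sub_dvd_iterate_derivative_of_pow_dvd k hp)

theorem derivative_X_sub_C_pow_succ_mul (a : R) (n : ℕ) (h : R[X]) :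
    derivative ((X - C a) ^ (n + 1) * h) =
      (X - C a) ^ n * (C ((n : R) + 1) * h + (X - C a) * derivative h) := by
  rw [derivative_mul, derivative_X_sub_C_pow, Nat.add_sub_cancel, pow_succ]
  push_cast
  ring

theorem eval_iterate_derivative_X_sub_C_pow_mul (a : R) (n : ℕ) (h : R[X]) :
    eval a (derivative^[n] ((X - C a) ^ n * h)) = n ! * eval a h := by
  induction n generalizing h with
  | zero => simp
  | succ n ih =>
    rw [Function.iterate_succ_apply, derivative_X_sub_C_pow_succ_mul, ih]
    simp [Nat.factorial_succ]
    ring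

theorem eval_iterate_derivative_succ_X_sub_C_pow_mul (a : R) (n : ℕ) (h : R[X]) :
    eval a (derivative^[n + 1] ((X - C a) ^ n * h)) = (n + 1)! * eval a (derivative h) := by
  induction n generalizing h with
  | zero => simp
  | succ n ih =>
    rw [Function.iterate_succ_apply, derivative_X_sub_C_pow_succ_mul, ih]
    simp [Nat.factorial_succ]
    ring

theorem integral_eval_mul_eval_derivative (p q : ℝ[X]) (a b : ℝ) :
    ∫ t in a..b, eval t p * eval t (derivative q) =
      eval b p * eval b q - eval a p * eval a q -
        ∫ t in a..b, eval t (derivative p) * eval t q :=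
  intervalIntegral.integral_mul_deriv_eq_deriv_mul (fun t _ => p.hasDerivAt t)
    (fun t _ => q.hasDerivAt t) ((derivative p).continuous.intervalIntegrable _ _)
    ((derivative q).continuous.intervalIntegrable _ _)

end Polynomial

theorem pow_add_two_of_sq_eq_one {a : ℝ} (ha : a ^ 2 = 1) (n : ℕ) : a ^ (n + 2) = a ^ n := by
  rw [pow_add, ha, mul_one]

theorem X_sq_sub_one_pow_eq_mul (n : ℕ) {a : ℝ} (ha : a ^ 2 = 1) :
    ((X ^ 2 - 1) ^ n : ℝ[X]) = (X - C a) ^ n * (X + C a) ^ n := by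
  have h1 : (1 : ℝ[X]) = C (a ^ 2) := by rw [ha, C_1]
  rw [← mul_pow, h1, C_pow]
  ring

noncomputable def legendre (n : ℕ) : ℝ[X] :=
  C ((2 : ℝ) ^ n * n !)⁻¹ * derivative^[n] ((X ^ 2 - 1) ^ n)

theorem natDegree_legendre_le (n : ℕ) : (legendre n).natDegree ≤ n := by
  refine (natDegree_C_mul_le _ _).trans <| (natDegree_iterate_derivative _ n).trans ?_
  have : ((X ^ 2 - 1) ^ n : ℝ[X]).natDegree ≤ n * 2 := by compute_degree
  omega

theorem eval_legendre (n : ℕ) {a : ℝ} (ha : a ^ 2 = 1) : eval a (legendre n) = a ^ n := by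
  rw [legendre, eval_mul, eval_C, X_sq_sub_one_pow_eq_mul n ha,
    eval_iterate_derivative_X_sub_C_pow_mul]
  simp only [eval_pow, eval_add, eval_X, eval_C]
  field_simp
  ring

theorem eval_derivative_legendre (n : ℕ) {a : ℝ} (ha : a ^ 2 = 1) :
    eval a (derivative (legendre n)) = n * (n + 1) / 2 * a ^ (n + 1) := by
  rw [legendre, derivative_C_mul, ← Function.iterate_succ_apply' derivative, eval_mul, eval_C,
    X_sq_sub_one_pow_eq_mul n ha, eval_iterate_derivative_succ_X_sub_C_pow_mul]
  rcases n with _ | n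
  · simp
  · rw [derivative_pow]
    simp only [eval_mul, eval_pow, eval_add, eval_X, eval_C, Nat.factorial_succ,
      derivative_add, derivative_X, derivative_C, add_zero, mul_one, Nat.add_sub_cancel]
    rw [pow_add_two_of_sq_eq_one ha]
    push_cast
    field_simp
    ring

theorem integral_eval_mul_iterate_derivative_sq_sub_one_pow {n k : ℕ} (hk : k ≤ n) {q : ℝ[X]}
    (hq : q.natDegree < k) :
    ∫ t in (-1 : ℝ)..1, eval t q * eval t (derivative^[k] ((X ^ 2 - 1) ^ n)) = 0 := by
  induction k generalizing q with
  | zero => exact absurd hq (Nat.not_lt_zero _)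
  | succ k ih =>
    have hvanish : ∀ a : ℝ, a ^ 2 = 1 → eval a (derivative^[k] ((X ^ 2 - 1) ^ n)) = 0 :=
      fun a ha => eval_iterate_derivative_eq_zero_of_pow_dvd
        (by rw [X_sq_sub_one_pow_eq_mul n ha]; exact dvd_mul_right _ _) hk
    rw [Function.iterate_succ_apply', integral_eval_mul_eval_derivative, hvanish 1 (by norm_num),
      hvanish (-1) (by norm_num)]
    rcases Nat.eq_zero_or_pos q.natDegree with hq0 | hq0
    · simp [derivative_of_natDegree_zero hq0]
    · rw [ih (by omega) ((natDegree_derivative_lt hq0.ne').trans_le (by omega))]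
      simp

theorem integral_eval_mul_legendre_eq_zero {n : ℕ} {q : ℝ[X]} (hq : q.natDegree < n) :
    ∫ t in (-1 : ℝ)..1, eval t q * eval t (legendre n) = 0 := by
  simp only [legendre, eval_mul, eval_C, mul_left_comm (eval _ q)]
  rw [intervalIntegral.integral_const_mul,
    integral_eval_mul_iterate_derivative_sq_sub_one_pow le_rfl hq, mul_zero]

theorem integral_eval_mul_eq_zero_of_moments {f : ℝ → ℝ} {a b : ℝ} {m : ℕ}
    (hf : IntervalIntegrable f volume a b) (hmom : ∀ k < m, ∫ t in a..b, t ^ k * f t = 0)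
    {q : ℝ[X]} (hq : q.natDegree < m) : ∫ t in a..b, eval t q * f t = 0 := by
  simp_rw [eval_eq_sum_range' hq, Finset.sum_mul, mul_assoc]
  rw [intervalIntegral.integral_finsetSum
    fun k _ => (hf.continuousOn_mul (continuous_pow k).continuousOn).const_mul _]
  refine Finset.sum_eq_zero fun k hk => ?_
  rw [intervalIntegral.integral_const_mul, hmom k (Finset.mem_range.mp hk), mul_zero]

theorem continuousOn_of_eq_add_primitive {y g : ℝ → ℝ} {a b : ℝ} (hab : a ≤ b)
    (hg : IntervalIntegrable g volume a b) (hy : ∀ t ∈ Icc a b, y t = y a + ∫ s in a..t, g s) :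
    ContinuousOn y (uIcc a b) :=
  (continuousOn_const.add (intervalIntegral.continuousOn_primitive_interval' hg left_mem_uIcc)).congr
    (by rw [uIcc_of_le hab]; exact hy)

theorem integral_mul_of_eq_add_primitive {u y g : ℝ → ℝ} {a b : ℝ} (hab : a ≤ b)
    (hu : ContDiff ℝ 1 u) (hg : IntervalIntegrable g volume a b)
    (hy : ∀ t ∈ Icc a b, y t = y a + ∫ s in a..t, g s) :
    ∫ t in a..b, u t * g t = u b * y b - u a * y a - ∫ t in a..b, deriv u t * y t := by
  set Y : ℝ → ℝ := fun t => y a + ∫ s in a..t, g s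
  have hY : AbsolutelyContinuousOnInterval Y a b :=
    contDiffOn_const.absolutelyContinuousOnInterval.fun_add
      (hg.absolutelyContinuousOnInterval_intervalIntegral left_mem_uIcc)
  have hderiv : ∀ᵐ t, t ∈ uIoc a b → u t * deriv Y t = u t * g t := by
    filter_upwards [hg.ae_hasDerivAt_integral] with t ht htab
    rw [((ht (uIoc_subset_uIcc htab) a left_mem_uIcc).const_add (y a)).deriv]
  have hyY : EqOn y Y (uIcc a b) := by rw [uIcc_of_le hab]; exact hy
  have hint : ∫ t in a..b, deriv u t * y t = ∫ t in a..b, deriv u t * Y t :=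
    intervalIntegral.integral_congr fun t ht => congrArg (deriv u t * ·) (hyY ht)
  rw [← intervalIntegral.integral_congr_ae hderiv,
    hu.contDiffOn.absolutelyContinuousOnInterval.integral_mul_deriv_eq_deriv_mul hY,
    hyY right_mem_uIcc, hyY left_mem_uIcc, hint]

theorem sq_intervalIntegral_mul_le {f g : ℝ → ℝ} {a b : ℝ} (hab : a ≤ b)
    (hf : IntervalIntegrable (fun t => f t ^ 2) volume a b)
    (hg : IntervalIntegrable (fun t => g t ^ 2) volume a b)
    (hfg : IntervalIntegrable (fun t => f t * g t) volume a b) :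
    (∫ t in a..b, f t * g t) ^ 2 ≤ (∫ t in a..b, f t ^ 2) * ∫ t in a..b, g t ^ 2 := by
  have hquad : ∀ x : ℝ, 0 ≤ (∫ t in a..b, g t ^ 2) * (x * x) +
      2 * (∫ t in a..b, f t * g t) * x + ∫ t in a..b, f t ^ 2 := by
    intro x
    have hexpand : (fun t => (f t + x * g t) ^ 2) =
        fun t => f t ^ 2 + ((2 * x) * (f t * g t) + (x * x) * g t ^ 2) := by
      ext t; ring
    have hnonneg : 0 ≤ ∫ t in a..b, (f t + x * g t) ^ 2 :=
      intervalIntegral.integral_nonneg hab fun t _ => sq_nonneg _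
    rw [hexpand, intervalIntegral.integral_add hf ((hfg.const_mul _).add (hg.const_mul _)),
      intervalIntegral.integral_add (hfg.const_mul _) (hg.const_mul _),
      intervalIntegral.integral_const_mul, intervalIntegral.integral_const_mul] at hnonneg
    linarith
  have := discrim_le_zero hquad
  rw [discrim] at this
  nlinarith

noncomputable def poincareExtremal (m : ℕ) : ℝ[X] :=
  C (((m : ℝ) + 1) * (m + 2))⁻¹ * legendre (m + 1) + C ((m : ℝ) * (m + 1))⁻¹ * legendre m

section poincareExtremal

variable {m : ℕ}

theorem eval_one_poincareExtremal (hm : 0 < m) :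
    eval 1 (poincareExtremal m) = 2 / (m * (m + 2)) := by
  have hm' : (m : ℝ) ≠ 0 := by positivity
  simp only [poincareExtremal, eval_add, eval_mul, eval_C, eval_legendre _ (one_pow 2), one_pow]
  field_simp
  ring

theorem eval_derivative_poincareExtremal_of_sq_eq_one (hm : 0 < m) {a : ℝ} (ha : a ^ 2 = 1) :
    eval a (derivative (poincareExtremal m)) = (a ^ m + a ^ (m + 1)) / 2 := by
  have hm' : (m : ℝ) ≠ 0 := by positivity
  simp only [poincareExtremal, derivative_add, derivative_C_mul, eval_add, eval_mul, eval_C,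
    eval_derivative_legendre _ ha]
  push_cast
  rw [pow_add_two_of_sq_eq_one ha]
  field_simp
  ring

theorem eval_one_derivative_poincareExtremal (hm : 0 < m) :
    eval 1 (derivative (poincareExtremal m)) = 1 := by
  rw [eval_derivative_poincareExtremal_of_sq_eq_one hm (one_pow 2)]
  norm_num

theorem eval_neg_one_derivative_poincareExtremal (hm : 0 < m) :
    eval (-1) (derivative (poincareExtremal m)) = 0 := by
  rw [eval_derivative_poincareExtremal_of_sq_eq_one hm (by norm_num), pow_succ]
  ring

theorem natDegree_derivative_derivative_poincareExtremal_lt (hm : 0 < m) :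
    (derivative (derivative (poincareExtremal m))).natDegree < m := by
  have hdeg : (poincareExtremal m).natDegree ≤ m + 1 :=
    natDegree_add_le_of_degree_le
      ((natDegree_C_mul_le _ _).trans (natDegree_legendre_le _))
      ((natDegree_C_mul_le _ _).trans ((natDegree_legendre_le _).trans m.le_succ))
  have h1 := natDegree_derivative_le (poincareExtremal m)
  have h2 := natDegree_derivative_le (derivative (poincareExtremal m))
  omega

theorem integral_pow_mul_eval_poincareExtremal {k : ℕ} (hk : k < m) :
    ∫ t in (-1 : ℝ)..1, t ^ k * eval t (poincareExtremal m) = 0 := by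
  have horth (n : ℕ) (hn : k < n) : ∫ t in (-1 : ℝ)..1, t ^ k * eval t (legendre n) = 0 := by
    simpa using integral_eval_mul_legendre_eq_zero (q := X ^ k) (by simpa using hn)
  simp only [poincareExtremal, eval_add, eval_mul, eval_C, mul_add, mul_left_comm (_ ^ k)]
  rw [intervalIntegral.integral_add, intervalIntegral.integral_const_mul,
    intervalIntegral.integral_const_mul, horth _ (by omega), horth _ hk, mul_zero, mul_zero, add_zero]
  all_goals exact (by fun_prop : Continuous _).intervalIntegrable _ _

theorem w12_poincareExtremal (m : ℕ) :
    W12 (fun t => eval t (poincareExtremal m)) (fun t => eval t (derivative (poincareExtremal m))) :=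
  ⟨(derivative _).continuous.intervalIntegrable _ _,
    ((derivative _).continuous.pow 2).intervalIntegrable _ _,
    fun t _ => by
      rw [intervalIntegral.integral_eq_sub_of_hasDerivAt (fun x _ => (poincareExtremal m).hasDerivAt x)
        ((derivative _).continuous.intervalIntegrable _ _)]
      ring⟩

theorem eval_one_eq_integral_eval_derivative_poincareExtremal_mul (hm : 0 < m) {y g : ℝ → ℝ}
    (hW : W12 y g) (hmom : ∀ k < m, ∫ t in (-1 : ℝ)..1, t ^ k * y t = 0) :
    y 1 = ∫ t in (-1 : ℝ)..1, eval t (derivative (poincareExtremal m)) * g t := by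
  obtain ⟨hg, -, hy⟩ := hW
  have hyint : IntervalIntegrable y volume (-1) 1 :=
    (continuousOn_of_eq_add_primitive (by norm_num) hg hy).intervalIntegrable
  rw [integral_mul_of_eq_add_primitive (by norm_num)
    (by simpa using (derivative (poincareExtremal m)).contDiff_aeval (𝕜 := ℝ) 1) hg hy]
  simp only [Polynomial.deriv]
  rw [eval_one_derivative_poincareExtremal hm, eval_neg_one_derivative_poincareExtremal hm,
    integral_eval_mul_eq_zero_of_moments hyint hmom
      (natDegree_derivative_derivative_poincareExtremal_lt hm)]
  ring

theorem integral_sq_eval_derivative_poincareExtremal (hm : 0 < m) :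
    ∫ t in (-1 : ℝ)..1, eval t (derivative (poincareExtremal m)) ^ 2 = 2 / (m * (m + 2)) := by
  rw [← eval_one_poincareExtremal hm, eval_one_eq_integral_eval_derivative_poincareExtremal_mul hm
    (w12_poincareExtremal m) fun k hk => integral_pow_mul_eval_poincareExtremal hk]
  simp only [sq]

end poincareExtremal

theorem poincare_at_one (m : ℕ) (hm : 1 ≤ m) :
    (∀ y g : ℝ → ℝ, W12 y g →
      (∀ k < m, (∫ t in (-1:ℝ)..1, t ^ k * y t) = 0) →
      (y 1) ^ 2 ≤ 2 / (m * (m + 2)) * ∫ t in (-1:ℝ)..1, (g t) ^ 2) ∧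
    (∀ B : ℝ,
      (∀ y g : ℝ → ℝ, W12 y g →
        (∀ k < m, (∫ t in (-1:ℝ)..1, t ^ k * y t) = 0) →
        (y 1) ^ 2 ≤ B * ∫ t in (-1:ℝ)..1, (g t) ^ 2) →
      2 / (m * (m + 2)) ≤ B) := by
  set P := derivative (poincareExtremal m)
  refine ⟨fun y g hW hmom => ?_, fun B hB => ?_⟩
  · rw [eval_one_eq_integral_eval_derivative_poincareExtremal_mul hm hW hmom,
      ← integral_sq_eval_derivative_poincareExtremal hm]
    exact sq_intervalIntegral_mul_le (by norm_num) ((P.continuous.pow 2).intervalIntegrable _ _)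
      hW.2.1 (hW.1.continuousOn_mul P.continuous.continuousOn)
  · have hpos : (0 : ℝ) < 2 / (m * (m + 2)) := by positivity
    have := hB _ _ (w12_poincareExtremal m) fun k hk => integral_pow_mul_eval_poincareExtremal hk
    rw [eval_one_poincareExtremal hm, integral_sq_eval_derivative_poincareExtremal hm, sq] at this
    exact le_of_mul_le_mul_right this hpos
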